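/- arXiv:2506.00192 — 2 statements merged into one kernel-verified Lean document; each statement's English description precedes it below -/
import Mathlib

section
/- Let a be a complex vector of length p with |a_i| = 1 for all i, let b be any complex vector of length q, and let w be a complex vector of length p. Define A = a b^H (a p×q matrix). Then A^H diag(w) A = (∑_{i=1}^{p} w_i) · b b^H. In particular, taking w_i = (v₂)_i² with v₂ the quadratic index vector on a symmetric array gives the paper's Finding 3: A^H diag(v₂ ⊙ v₂) A = ‖v₂‖² · b b^H. -/
open Matrix

namespace Matrix

variable {α : Type*} {l m n : Type*} [Fintype m] [DecidableEq m]

theorem vecMulVec_mul_diagonal_mul_vecMulVec [CommSemiring α]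
    (u : l → α) (v w x : m → α) (y : n → α) :
    vecMulVec u v * diagonal w * vecMulVec x y = ((v * w) ⬝ᵥ x) • vecMulVec u y := by
  have hdiag : v ᵥ* diagonal w = v * w := funext (vecMul_diagonal v w)
  rw [vecMulVec_mul, hdiag, vecMulVec_mul_vecMulVec, vecMulVec_smul]

end Matrix

theorem RCLike.star_mul_self_of_norm_eq_one {𝕜 : Type*} [RCLike 𝕜] {z : 𝕜} (hz : ‖z‖ = 1) :
    star z * z = 1 := by
  rw [RCLike.star_def, RCLike.conj_mul, hz]
  norm_num

theorem dotProduct_star_mul_eq_sum_of_norm_eq_one {𝕜 ι : Type*} [RCLike 𝕜] [Fintype ι]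
    {a : ι → 𝕜} (ha : ∀ i, ‖a i‖ = 1) (w : ι → 𝕜) :
    (star a * w) ⬝ᵥ a = ∑ i, w i := by
  refine Finset.sum_congr rfl fun i _ => ?_
  calc star (a i) * w i * a i = star (a i) * a i * w i := by ring
    _ = w i := by rw [RCLike.star_mul_self_of_norm_eq_one (ha i), one_mul]

/-- Finding 3 of Proposition 1 (general form): for `A = a b^H` with `|a_i| = 1` for all `i`,
`A^H diag(w) A = (∑ i, w_i) • b b^H`. -/
theorem stmt_4 (p q : ℕ) (a : Fin p → ℂ) (ha : ∀ i, ‖a i‖ = 1)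
    (b : Fin q → ℂ) (w : Fin p → ℂ) :
    (Matrix.vecMulVec a (star b))ᴴ * Matrix.diagonal w * Matrix.vecMulVec a (star b)
      = (∑ i, w i) • Matrix.vecMulVec b (star b) := by
  rw [conjTranspose_vecMulVec, star_star, vecMulVec_mul_diagonal_mul_vecMulVec,
    dotProduct_star_mul_eq_sum_of_norm_eq_one ha]
end

section
/- Let a ≤ b be real numbers, and let T₁, T₂, C₁₁, C₂, e be positive reals, C₁₀ a real with C₁₁·a + C₁₀ > 0, and c a real number. Define f(x) = T₁/(C₁₁ x + C₁₀) + T₂/(C₂ (x − c)² + e) for x ∈ [a, b]. If |a − c| ≤ |b − c|, then f attains its minimum over [a, b] at the right endpoint: f(b) ≤ f(x) for all x ∈ [a, b]. (The abstract content of Proposition 2: under the stated vertex condition, the optimal squared sensor interval is the largest feasible value d̃_s* = (M d_R / M_r)², i.e., the sensor array aperture equals the STAR array aperture.) -/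
/-!
Both summands decrease from `x` to `b`: the first because its denominator `C₁₁ x + C₁₀` is
increasing and positive on `[a, b]`, the second because the vertex condition makes `b` the point
of `[a, b]` farthest from `c`, so that the quadratic denominator is largest there.
-/

theorem abs_sub_le_abs_sub_right_of_mem_Icc {α : Type*} [AddCommGroup α] [LinearOrder α]
    [IsOrderedAddMonoid α] {a b c x : α} (hx : x ∈ Set.Icc a b) (h : |a - c| ≤ |b - c|) :
    |x - c| ≤ |b - c| :=
  (abs_le_max_abs_abs (sub_le_sub_right hx.1 c) (sub_le_sub_right hx.2 c)).trans (max_le h le_rfl)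

theorem stmt_7_general (a b T₁ T₂ C₁₁ C₂ e C₁₀ c : ℝ)
    (hT₁ : 0 < T₁) (hT₂ : 0 < T₂) (hC₁₁ : 0 < C₁₁) (hC₂ : 0 < C₂)
    (he : 0 < e) (hden : 0 < C₁₁ * a + C₁₀) (hvertex : |a - c| ≤ |b - c|) :
    ∀ x ∈ Set.Icc a b,
      T₁ / (C₁₁ * b + C₁₀) + T₂ / (C₂ * (b - c) ^ 2 + e)
        ≤ T₁ / (C₁₁ * x + C₁₀) + T₂ / (C₂ * (x - c) ^ 2 + e) := by
  intro x hx
  have hlin_a_x : C₁₁ * a + C₁₀ ≤ C₁₁ * x + C₁₀ := by gcongr; exact hx.1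
  have hlin_x_b : C₁₁ * x + C₁₀ ≤ C₁₁ * b + C₁₀ := by gcongr; exact hx.2
  have hsq : (x - c) ^ 2 ≤ (b - c) ^ 2 :=
    sq_le_sq.mpr (abs_sub_le_abs_sub_right_of_mem_Icc hx hvertex)
  have hquad : C₂ * (x - c) ^ 2 + e ≤ C₂ * (b - c) ^ 2 + e := by gcongr
  have hx_pos : 0 < C₁₁ * x + C₁₀ := hden.trans_le hlin_a_x
  gcongr

/-- Proposition 2 (abstract form): with positive `T₁, T₂, C₁₁, C₂, e`, positive denominator
`C₁₁ a + C₁₀ > 0` at the left endpoint, and vertex condition `|a - c| ≤ |b - c|`, the function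
`f(x) = T₁/(C₁₁ x + C₁₀) + T₂/(C₂ (x - c)² + e)` attains its minimum over `[a, b]` at `b`. -/
theorem stmt_7 (a b T₁ T₂ C₁₁ C₂ e C₁₀ c : ℝ)
    (hab : a ≤ b) (hT₁ : 0 < T₁) (hT₂ : 0 < T₂) (hC₁₁ : 0 < C₁₁) (hC₂ : 0 < C₂)
    (he : 0 < e) (hden : 0 < C₁₁ * a + C₁₀) (hvertex : |a - c| ≤ |b - c|) :
    ∀ x ∈ Set.Icc a b,
      T₁ / (C₁₁ * b + C₁₀) + T₂ / (C₂ * (b - c) ^ 2 + e)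
        ≤ T₁ / (C₁₁ * x + C₁₀) + T₂ / (C₂ * (x - c) ^ 2 + e) :=
  stmt_7_general a b T₁ T₂ C₁₁ C₂ e C₁₀ c hT₁ hT₂ hC₁₁ hC₂ he hden hvertex
end
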